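/- Let v₀, v₁, …, v_k be a polygonal path in ℝ² that is angle-monotone of width γ < 180° with direction β. Then for all i ≤ j ≤ k, ⟨v_j − v_i, u_β⟩ ≥ 0 where u_β = (cos β, sin β), and |v_k − v_0| ≥ cos(γ/2) · ∑_{i} |v_{i+1} − v_i|. -/

import Mathlib

open Real RealInnerProductSpace

/-- The unit vector in direction `θ` (radians) in the Euclidean plane. -/
noncomputable def dir (θ : ℝ) : EuclideanSpace ℝ (Fin 2) :=
  (WithLp.equiv 2 (Fin 2 → ℝ)).symm ![Real.cos θ, Real.sin θ]

lemma inner_dir (θ β : ℝ) : ⟪dir θ, dir β⟫ = Real.cos (θ - β) := by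
  simp [dir, PiLp.inner_apply, Fin.sum_univ_two, Real.cos_sub, mul_comm]

lemma norm_dir (θ : ℝ) : ‖dir θ‖ = 1 := by
  have h := inner_dir θ θ
  simp only [sub_self, Real.cos_zero, real_inner_self_eq_norm_sq] at h
  nlinarith [norm_nonneg (dir θ)]

/-- Along an angle-monotone path of width `γ < 180°` with direction `β`, the
projection onto the unit vector in direction `β` is monotone nondecreasing, and the
straight-line distance between the endpoints is at least `cos (γ/2)` times the total
path length. -/
theorem stmt_12 (β γ : ℝ) (hγ0 : 0 ≤ γ) (hγ : γ < π) (k : ℕ)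
    (v : ℕ → EuclideanSpace ℝ (Fin 2))
    (hmono : ∀ i < k, ∃ r θ : ℝ, 0 < r ∧ |θ - β| ≤ γ / 2 ∧ v (i + 1) - v i = r • dir θ) :
    (∀ i j : ℕ, i ≤ j → j ≤ k → 0 ≤ ⟪v j - v i, dir β⟫) ∧
    Real.cos (γ / 2) * ∑ i ∈ Finset.range k, ‖v (i + 1) - v i‖ ≤ ‖v k - v 0‖ := by
  have hcospos : 0 < Real.cos (γ / 2) := by
    apply Real.cos_pos_of_mem_Ioo
    constructor <;> [linarith; linarith]
  -- edge inequality
  have hedge : ∀ i < k, Real.cos (γ / 2) * ‖v (i + 1) - v i‖ ≤ ⟪v (i + 1) - v i, dir β⟫ := by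
    intro i hi
    obtain ⟨r, θ, hr, hθ, heq⟩ := hmono i hi
    rw [heq, norm_smul, norm_dir, inner_smul_left]
    simp only [RCLike.star_def, conj_trivial, mul_one, Real.norm_eq_abs, abs_of_pos hr]
    rw [inner_dir]
    have hcos : Real.cos (γ / 2) ≤ Real.cos (θ - β) := by
      rw [← Real.cos_abs (θ - β)]
      apply Real.cos_le_cos_of_nonneg_of_le_pi (abs_nonneg _) (by linarith) hθ
    nlinarith
  -- telescoping
  have key : ∀ i j : ℕ, i ≤ j → j ≤ k →
      Real.cos (γ / 2) * ∑ m ∈ Finset.Ico i j, ‖v (m + 1) - v m‖ ≤ ⟪v j - v i, dir β⟫ := by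
    intro i j hij hjk
    induction j with
    | zero =>
        interval_cases i
        simp
    | succ n ih =>
        rcases Nat.lt_or_ge i (n + 1) with h | h
        · have hin : i ≤ n := Nat.lt_succ_iff.mp h
          have hnk : n ≤ k := le_of_lt (Nat.lt_of_lt_of_le (Nat.lt_succ_self n) hjk)
          have h1 := ih hin hnk
          have h2 := hedge n (Nat.lt_of_lt_of_le (Nat.lt_succ_self n) hjk)
          rw [Finset.sum_Ico_succ_top hin, mul_add]
          have : v (n + 1) - v i = (v n - v i) + (v (n + 1) - v n) := by abel
          rw [this, inner_add_left]
          linarith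
        · have : i = n + 1 := le_antisymm hij h
          subst this
          simp
  constructor
  · intro i j hij hjk
    refine le_trans ?_ (key i j hij hjk)
    apply mul_nonneg hcospos.le
    exact Finset.sum_nonneg fun m _ => norm_nonneg _
  · have h := key 0 k (Nat.zero_le _) le_rfl
    have h2 : ⟪v k - v 0, dir β⟫ ≤ ‖v k - v 0‖ := by
      have := real_inner_le_norm (v k - v 0) (dir β)
      rwa [norm_dir, mul_one] at this
    simp only [Nat.Ico_zero_eq_range] at h
    linarith
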